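/- Let m ≥ 3, r > 0, c_j = 2(j−1)r sin(π/m) for 1 ≤ j ≤ m+1, and let Q be the uniform distribution on [0, 2mr sin(π/m)]. Let k ≥ 1 and n = mk + 1. Then the n-th conditional unconstrained quantization error for Q with respect to the conditional set β = {c_j : 1 ≤ j ≤ m+1} equals r² sin²(π/m)/(3k²), and this infimum is attained by the set γ_n = ⋃_{j=1}^{m} { c_j + 2(i−1)r sin(π/m)/k : 1 ≤ i ≤ k+1 }. -/

import Mathlib

open MeasureTheory Set Filter

/-- The uniform distribution on `[a, b]`: normalized Lebesgue measure restricted to `[a, b]`. -/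
noncomputable def uniformOn (a b : ℝ) : Measure ℝ :=
  (ENNReal.ofReal (b - a))⁻¹ • volume.restrict (Set.Icc a b)

/-- The distortion error of a set `s` of points for the measure `P`. -/
noncomputable def distortion (P : Measure ℝ) (s : Set ℝ) : ℝ :=
  ∫ x, sInf ((fun a => (x - a) ^ 2) '' s) ∂P

/-- The `n`-th conditional (unconstrained) quantization error for `P` with respect to
the conditional set `β`. -/
noncomputable def condQuantError (P : Measure ℝ) (β : Set ℝ) (n : ℕ) : ℝ :=
  sInf { v : ℝ | ∃ α : Set ℝ, α.Finite ∧ α.ncard ≤ n - β.ncard ∧ v = distortion P (α ∪ β) }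

/-! If `S ∋ p, q` has no point strictly between `p` and `q`, then on `[p, q]` the squared distance
to `S` is `min (t - p) (q - t) ^ 2`, whose integral is `(q - p) ^ 3 / 12`. Peeling off one such cell
at a time and using convexity of `x ↦ x ^ 3`, a finite set with at most `M + 1` points that contains
`0` and `L` has `∫₀ᴸ infDist t S ^ 2 ≥ L ^ 3 / (12 M ^ 2)`, with equality for the grid of step
`δ = L / M`. The conditional points `c_j` are the grid points of step `δ = 2 r sin(π/m) / k`
with index divisible by `k`, so the optimal choice is the rest of this grid, `γ_n`, and the error is
`δ ^ 2 / 12`. -/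

open Metric

lemma sInf_image_sq_sub_eq_infDist_sq {S : Set ℝ} (hS : S.Finite) (hne : S.Nonempty) (x : ℝ) :
    sInf ((fun a => (x - a) ^ 2) '' S) = infDist x S ^ 2 := by
  obtain ⟨y, hyS, hy⟩ := hS.isCompact.exists_infDist_eq_dist hne x
  refine IsLeast.csInf_eq ⟨⟨y, hyS, by rw [hy, Real.dist_eq, sq_abs]⟩, ?_⟩
  rintro _ ⟨a, haS, rfl⟩
  show _ ≤ (x - a) ^ 2
  rw [← sq_abs (x - a), ← Real.dist_eq]
  exact pow_le_pow_left₀ infDist_nonneg (infDist_le_dist_of_mem haS) 2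

lemma distortion_uniformOn {a b : ℝ} (hab : a < b) {S : Set ℝ} (hS : S.Finite)
    (hne : S.Nonempty) :
    distortion (uniformOn a b) S = (∫ t in a..b, infDist t S ^ 2) / (b - a) := by
  simp only [distortion, uniformOn, integral_smul_measure,
    sInf_image_sq_sub_eq_infDist_sq hS hne, integral_Icc_eq_integral_Ioc,
    ← intervalIntegral.integral_of_le hab.le, ENNReal.toReal_inv,
    ENNReal.toReal_ofReal (sub_pos.2 hab).le, smul_eq_mul]
  ring

lemma infDist_eq_min_of_gap {S : Set ℝ} {p q t : ℝ} (hp : p ∈ S) (hq : q ∈ S)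
    (hgap : ∀ a ∈ S, a ≤ p ∨ q ≤ a) (ht : t ∈ Icc p q) :
    infDist t S = min (t - p) (q - t) := by
  refine le_antisymm (le_min ?_ ?_) ((le_infDist ⟨p, hp⟩).2 fun a ha => ?_)
  · simpa [Real.dist_eq, abs_of_nonneg (sub_nonneg.2 ht.1)]
      using infDist_le_dist_of_mem hp (x := t)
  · simpa [Real.dist_eq, abs_of_nonpos (sub_nonpos.2 ht.2)]
      using infDist_le_dist_of_mem hq (x := t)
  · rw [Real.dist_eq]
    rcases hgap a ha with h | h
    · exact (min_le_left _ _).trans (by rw [abs_of_nonneg] <;> linarith [ht.1])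
    · exact (min_le_right _ _).trans (by rw [abs_of_nonpos] <;> linarith [ht.2])

lemma integral_min_sub_sq {p q : ℝ} (hpq : p ≤ q) :
    ∫ t in p..q, min (t - p) (q - t) ^ 2 = (q - p) ^ 3 / 12 := by
  have hcont : Continuous fun t : ℝ => min (t - p) (q - t) ^ 2 := by fun_prop
  have hleft : ∫ t in p..(p + q) / 2, min (t - p) (q - t) ^ 2
      = ∫ t in p..(p + q) / 2, (t - p) ^ 2 := by
    refine intervalIntegral.integral_congr fun t ht => ?_
    rw [uIcc_of_le (by linarith)] at ht
    rw [min_eq_left (by linarith [ht.2])]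
  have hright : ∫ t in (p + q) / 2..q, min (t - p) (q - t) ^ 2
      = ∫ t in (p + q) / 2..q, (t - q) ^ 2 := by
    refine intervalIntegral.integral_congr fun t ht => ?_
    rw [uIcc_of_le (by linarith)] at ht
    rw [min_eq_right (by linarith [ht.1]), ← neg_sub, neg_sq]
  rw [← intervalIntegral.integral_add_adjacent_intervals (b := (p + q) / 2)
      (hcont.intervalIntegrable _ _) (hcont.intervalIntegrable _ _), hleft, hright,
    intervalIntegral.integral_comp_sub_right (· ^ 2),
    intervalIntegral.integral_comp_sub_right (· ^ 2), integral_pow, integral_pow]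
  ring

lemma integral_infDist_sq_of_gap {S : Set ℝ} {p q : ℝ} (hpq : p ≤ q) (hp : p ∈ S)
    (hq : q ∈ S)
    (hgap : ∀ a ∈ S, a ≤ p ∨ q ≤ a) :
    ∫ t in p..q, infDist t S ^ 2 = (q - p) ^ 3 / 12 := by
  rw [← integral_min_sub_sq hpq]
  refine intervalIntegral.integral_congr fun t ht => ?_
  rw [uIcc_of_le hpq] at ht
  simp only [infDist_eq_min_of_gap hp hq hgap ht]

lemma integral_infDist_sq_add {S : Set ℝ} (a b c : ℝ) :
    ∫ t in a..c, infDist t S ^ 2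
      = (∫ t in a..b, infDist t S ^ 2) + ∫ t in b..c, infDist t S ^ 2 :=
  have hcont : Continuous fun t => infDist t S ^ 2 := (continuous_infDist_pt S).pow 2
  (intervalIntegral.integral_add_adjacent_intervals (hcont.intervalIntegrable a b)
    (hcont.intervalIntegrable b c)).symm

lemma cube_add_le_of_cube_le {u v X N : ℝ} (hu : 0 ≤ u) (hv : 0 ≤ v) (hX : 0 ≤ X)
    (hN : 0 ≤ N) (h : u ^ 3 ≤ N ^ 2 * X) : (u + v) ^ 3 ≤ (N + 1) ^ 2 * (X + v ^ 3) := by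
  rcases hN.eq_or_lt with rfl | hN
  · obtain rfl : u = 0 :=
      (pow_eq_zero_iff three_ne_zero).1 (le_antisymm (by simpa using h) (pow_nonneg hu 3))
    simpa using hX
  -- Convexity of `x ↦ x ^ 3`, applied to `N` copies of `u / N` and one copy of `v`.
  have hconv : N ^ 2 * (u + v) ^ 3 ≤ (N + 1) ^ 2 * (u ^ 3 + N ^ 2 * v ^ 3) := by
    have hid : (N + 1) ^ 2 * (u ^ 3 + N ^ 2 * v ^ 3) - N ^ 2 * (u + v) ^ 3
        = (u - N * v) ^ 2 * ((2 * N + 1) * u + N * (N + 2) * v) := by ring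
    rw [← sub_nonneg, hid]
    positivity
  refine le_of_mul_le_mul_left ?_ (by positivity : 0 < N ^ 2)
  calc N ^ 2 * (u + v) ^ 3 ≤ (N + 1) ^ 2 * (u ^ 3 + N ^ 2 * v ^ 3) := hconv
    _ ≤ (N + 1) ^ 2 * (N ^ 2 * X + N ^ 2 * v ^ 3) := by gcongr
    _ = N ^ 2 * ((N + 1) ^ 2 * (X + v ^ 3)) := by ring

-- Multiplied out so that the case `N = 0`, where `p = q`, involves no division by zero.
lemma cube_le_integral_infDist_sq {S : Set ℝ} (hS : S.Finite) (N : ℕ) :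
    ∀ {p q : ℝ}, p ≤ q → p ∈ S → q ∈ S → (S ∩ Icc p q).ncard ≤ N + 1 →
      (q - p) ^ 3 ≤ 12 * N ^ 2 * ∫ t in p..q, infDist t S ^ 2 := by
  induction N with
  | zero =>
    intro p q hpq hp hq hcard
    obtain rfl : p = q :=
      (ncard_le_one_iff (hS.inter_of_left _)).1 hcard ⟨hp, le_rfl, hpq⟩ ⟨hq, hpq, le_rfl⟩
    simp
  | succ N ih =>
    intro p q hpq hp hq hcard
    by_cases hgap : ∀ a ∈ S, a ≤ p ∨ q ≤ a
    · rw [integral_infDist_sq_of_gap hpq hp hq hgap]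
      have hcube : 0 ≤ (q - p) ^ 3 := pow_nonneg (sub_nonneg.2 hpq) 3
      have hN : (1 : ℝ) ≤ ((N + 1 : ℕ) : ℝ) ^ 2 := one_le_pow₀ (by simp)
      nlinarith
    -- Split off the last cell `[a, q]`; the induction hypothesis applies to `[p, a]`.
    push Not at hgap
    obtain ⟨a, ⟨haS, hpa, haq⟩, hamax⟩ := exists_max_image (S ∩ Ioo p q) id
      (hS.inter_of_left _) (by obtain ⟨b, hbS, hpb, hbq⟩ := hgap; exact ⟨b, hbS, hpb, hbq⟩)
    have hgap' : ∀ b ∈ S, b ≤ a ∨ q ≤ b := by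
      intro b hb
      by_contra! h
      exact (hamax b ⟨hb, hpa.trans h.1, h.2⟩).not_gt h.1
    have hcard' : (S ∩ Icc p a).ncard ≤ N + 1 := by
      have hsub : S ∩ Icc p a ⊂ S ∩ Icc p q := by
        refine ssubset_of_subset_not_subset
          (inter_subset_inter_right _ (Icc_subset_Icc_right haq.le)) fun h => ?_
        exact haq.not_ge (h ⟨hq, hpq, le_rfl⟩).2.2
      have hlt := ncard_lt_ncard hsub (hS.inter_of_left _)
      omega
    have hX : 0 ≤ 12 * ∫ t in p..a, infDist t S ^ 2 :=
      mul_nonneg (by norm_num) (intervalIntegral.integral_nonneg hpa.le fun _ _ => sq_nonneg _)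
    have key := cube_add_le_of_cube_le (sub_nonneg.2 hpa.le) (sub_nonneg.2 haq.le) hX
      (Nat.cast_nonneg N) (by linarith [ih hpa.le hp haS hcard'])
    rw [integral_infDist_sq_add p a q, integral_infDist_sq_of_gap haq.le haS hq hgap']
    push_cast
    convert key using 1 <;> ring

def uniformGrid (δ : ℝ) (M : ℕ) : Set ℝ := (fun i : ℕ => (i : ℝ) * δ) '' Iic M

lemma finite_uniformGrid (δ : ℝ) (M : ℕ) : (uniformGrid δ M).Finite := (finite_Iic M).image _

lemma ncard_uniformGrid {δ : ℝ} (hδ : δ ≠ 0) (M : ℕ) :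
    (uniformGrid δ M).ncard = M + 1 := by
  have hinj : Function.Injective fun i : ℕ => (i : ℝ) * δ := fun i j h => by
    exact_mod_cast mul_right_cancel₀ hδ h
  rw [uniformGrid, ncard_image_of_injective _ hinj, ← Finset.coe_Iic, ncard_coe_finset,
    Nat.card_Iic]

lemma integral_infDist_sq_uniformGrid {δ : ℝ} (hδ : 0 ≤ δ) {M j : ℕ} (hj : j ≤ M) :
    ∫ t in 0..j * δ, infDist t (uniformGrid δ M) ^ 2 = j * δ ^ 3 / 12 := by
  induction j with
  | zero => simp
  | succ j ih =>
    have hgap : ∀ b ∈ uniformGrid δ M, b ≤ j * δ ∨ ((j + 1 : ℕ) : ℝ) * δ ≤ b := by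
      rintro _ ⟨i, -, rfl⟩
      rcases le_or_gt i j with h | h
      · exact Or.inl (mul_le_mul_of_nonneg_right (by exact_mod_cast h) hδ)
      · exact Or.inr (mul_le_mul_of_nonneg_right (by exact_mod_cast h) hδ)
    have hj' : (j : ℝ) * δ ∈ uniformGrid δ M := ⟨j, mem_Iic.2 (by omega), rfl⟩
    rw [integral_infDist_sq_add 0 (j * δ), ih (by omega),
      integral_infDist_sq_of_gap (mul_le_mul_of_nonneg_right (by simp) hδ) hj' ⟨j + 1, hj, rfl⟩
        hgap]
    push_cast
    ring

lemma distortion_uniformGrid {δ : ℝ} (hδ : 0 < δ) {M : ℕ} (hM : 0 < M) :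
    distortion (uniformOn 0 (M * δ)) (uniformGrid δ M) = δ ^ 2 / 12 := by
  rw [distortion_uniformOn (by positivity) (finite_uniformGrid δ M) ⟨0, 0, by simp, by simp⟩,
    integral_infDist_sq_uniformGrid hδ.le le_rfl]
  field_simp
  ring

lemma le_distortion_of_ncard_le {δ : ℝ} (hδ : 0 < δ) {M : ℕ} (hM : 0 < M) {S : Set ℝ}
    (hS : S.Finite) (h0 : 0 ∈ S) (hL : M * δ ∈ S) (hcard : S.ncard ≤ M + 1) :
    δ ^ 2 / 12 ≤ distortion (uniformOn 0 (M * δ)) S := by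
  have hMδ : 0 < (M : ℝ) * δ := by positivity
  have key := cube_le_integral_infDist_sq hS M hMδ.le h0 hL
    ((ncard_inter_le_ncard_left _ _ hS).trans hcard)
  rw [distortion_uniformOn hMδ hS ⟨0, h0⟩, sub_zero, le_div_iff₀ hMδ]
  refine le_of_mul_le_mul_left ?_ (by positivity : (0 : ℝ) < 12 * M ^ 2)
  linear_combination key

lemma condQuantError_uniformOn_of_subset_uniformGrid {δ : ℝ} (hδ : 0 < δ) {M : ℕ}
    (hM : 0 < M) {β : Set ℝ} (hβ : β ⊆ uniformGrid δ M) (h0 : 0 ∈ β)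
    (hL : M * δ ∈ β) :
    condQuantError (uniformOn 0 (M * δ)) β (M + 1) = δ ^ 2 / 12 := by
  have hβfin : β.Finite := (finite_uniformGrid δ M).subset hβ
  have hβcard : β.ncard ≤ M + 1 :=
    ncard_uniformGrid hδ.ne' M ▸ ncard_le_ncard hβ (finite_uniformGrid δ M)
  refine IsLeast.csInf_eq
    ⟨⟨uniformGrid δ M \ β, (finite_uniformGrid δ M).sdiff, ?_, ?_⟩, ?_⟩
  · rw [ncard_sdiff hβ hβfin, ncard_uniformGrid hδ.ne']
  · rw [sdiff_union_of_subset hβ, distortion_uniformGrid hδ hM]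
  · rintro _ ⟨α, hα, hαcard, rfl⟩
    refine le_distortion_of_ncard_le hδ hM (hα.union hβfin) (Or.inr h0) (Or.inr hL) ?_
    have := ncard_union_le α β
    omega

lemma biUnion_Icc_image_block_eq_Iic {m k : ℕ} (hm : 1 ≤ m) (hk : 1 ≤ k) :
    ⋃ j ∈ Icc 1 m, (fun i => (j - 1) * k + (i - 1)) '' Icc 1 (k + 1) = Iic (m * k) := by
  ext t
  simp only [mem_iUnion, mem_image, mem_Icc, mem_Iic, exists_prop]
  constructor
  · rintro ⟨j, ⟨hj1, hjm⟩, i, ⟨hi1, hik⟩, rfl⟩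
    have : (j - 1) * k + k ≤ m * k := by
      rw [← Nat.succ_mul]; exact Nat.mul_le_mul_right k (by omega)
    omega
  · intro ht
    rcases ht.lt_or_eq with ht | rfl
    · refine ⟨t / k + 1, ⟨le_add_self, Nat.div_lt_of_lt_mul (by rwa [mul_comm])⟩,
        t % k + 1, ⟨le_add_self, by have := Nat.mod_lt t hk; omega⟩, ?_⟩
      simpa using Nat.div_add_mod' t k
    · refine ⟨m, ⟨hm, le_rfl⟩, k + 1, ⟨le_add_self, le_rfl⟩, ?_⟩
      rw [add_tsub_cancel_right, ← Nat.succ_mul, Nat.succ_eq_add_one, Nat.sub_add_cancel hm]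

lemma biUnion_image_eq_uniformGrid {m k : ℕ} (hm : 1 ≤ m) (hk : 1 ≤ k) {δ : ℝ}
    {f : ℕ → ℕ → ℝ} (hf : ∀ j ∈ Icc 1 m, ∀ i ∈ Icc 1 (k + 1),
      f j i = (((j - 1) * k + (i - 1) : ℕ) : ℝ) * δ) :
    ⋃ j ∈ Icc 1 m, f j '' Icc 1 (k + 1) = uniformGrid δ (m * k) := by
  rw [uniformGrid, ← biUnion_Icc_image_block_eq_Iic hm hk, image_iUnion₂]
  refine iUnion₂_congr fun j hj => ?_
  rw [image_image]
  exact image_congr (hf j hj)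

lemma sin_pi_div_natCast_pos {m : ℕ} (hm : 1 < m) : 0 < Real.sin (Real.pi / m) :=
  Real.sin_pos_of_pos_of_lt_pi (by positivity)
    (div_lt_self Real.pi_pos (by exact_mod_cast hm))

/-- Proposition 4.4 (case `q = 0`): for `n = mk + 1`, the `n`-th conditional quantization
error of the uniform distribution on `[0, 2mr sin(π/m)]` with respect to
`{c_j : 1 ≤ j ≤ m+1}`, `c_j = 2(j-1)r sin(π/m)`, equals `r² sin²(π/m)/(3k²)`, attained by
`⋃_{j=1}^m {c_j + 2(i-1)r sin(π/m)/k : 1 ≤ i ≤ k+1}`. -/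
theorem stmt13 (m : ℕ) (hm : 3 ≤ m) (r : ℝ) (hr : 0 < r) (k : ℕ) (hk : 1 ≤ k)
    (n : ℕ) (hn : n = m * k + 1)
    (c : ℕ → ℝ) (hc : ∀ j : ℕ, c j = 2 * ((j : ℝ) - 1) * r * Real.sin (Real.pi / m)) :
    condQuantError (uniformOn 0 (2 * m * r * Real.sin (Real.pi / m)))
        (c '' Set.Icc 1 (m + 1)) n
      = r ^ 2 * Real.sin (Real.pi / m) ^ 2 / (3 * (k : ℝ) ^ 2)
    ∧ distortion (uniformOn 0 (2 * m * r * Real.sin (Real.pi / m)))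
        (⋃ j ∈ Set.Icc 1 m,
          (fun i : ℕ => c j + 2 * ((i : ℝ) - 1) * r * Real.sin (Real.pi / m) / (k : ℝ)) ''
            Set.Icc 1 (k + 1))
      = r ^ 2 * Real.sin (Real.pi / m) ^ 2 / (3 * (k : ℝ) ^ 2) := by
  set s := Real.sin (Real.pi / m)
  have hs : 0 < s := sin_pi_div_natCast_pos (by omega)
  have hkR : (0 : ℝ) < k := by exact_mod_cast hk
  set δ := 2 * r * s / k with hδ_def
  have hδ : 0 < δ := by positivity
  have hkδ : (k : ℝ) * δ = 2 * r * s := mul_div_cancel₀ _ hkR.ne'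
  have hc_eq : ∀ j, 1 ≤ j → c j = (((j - 1) * k : ℕ) : ℝ) * δ := fun j hj => by
    rw [hc]
    push_cast [Nat.cast_sub hj]
    linear_combination (1 - (j : ℝ)) * hkδ
  have hL : 2 * m * r * s = ((m * k : ℕ) : ℝ) * δ := by
    push_cast
    linear_combination (-(m : ℝ)) * hkδ
  have hβ : c '' Icc 1 (m + 1) ⊆ uniformGrid δ (m * k) := by
    rintro _ ⟨j, ⟨hj1, hjm⟩, rfl⟩
    exact ⟨(j - 1) * k, mem_Iic.2 (Nat.mul_le_mul_right k (by omega)), (hc_eq j hj1).symm⟩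
  have hγ := biUnion_image_eq_uniformGrid (m := m) (by omega) hk (δ := δ)
    (f := fun j (i : ℕ) => c j + 2 * ((i : ℝ) - 1) * r * s / k) fun j hj i hi => by
      rw [hc_eq j hj.1, hδ_def]
      push_cast [Nat.cast_sub hi.1, Nat.cast_sub hj.1]
      field_simp
  have hval : δ ^ 2 / 12 = r ^ 2 * s ^ 2 / (3 * (k : ℝ) ^ 2) := by
    rw [hδ_def]
    field_simp
    ring
  have hM : 0 < m * k := Nat.mul_pos (by omega) hk
  rw [hL, hn, hγ, ← hval]
  refine ⟨condQuantError_uniformOn_of_subset_uniformGrid hδ hM hβ ?_ ?_,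
    distortion_uniformGrid hδ hM⟩
  · exact ⟨1, ⟨le_rfl, by omega⟩, by rw [hc]; simp⟩
  · exact ⟨m + 1, ⟨by omega, le_rfl⟩, by rw [hc_eq _ (by omega)]; simp⟩
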